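/- Corollary (strong QI implies unique stationarity): let 𝒦 ⊆ ℝ^{mN×pN} be a linear subspace that is strongly quadratically invariant with respect to G and such that K·G is nilpotent for every K ∈ 𝒦. Then the problem min_{K ∈ 𝒦} J(K) is uniquely stationary: every K̄ ∈ 𝒦 with ∇J(K̄) ∈ 𝒦^⊥ satisfies J(K̄) ≤ J(K) for all K ∈ 𝒦. -/

import Mathlib

open Matrix

noncomputable section

/-- Squared Frobenius norm of a real matrix. -/
def frobSq {a b : Type*} [Fintype a] [Fintype b] (A : Matrix a b ℝ) : ℝ :=
  ∑ i, ∑ j, (A i j) ^ 2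

/-- Squared Euclidean norm of a real vector. -/
def vecSq {a : Type*} [Fintype a] (v : a → ℝ) : ℝ :=
  ∑ i, (v i) ^ 2

/-- The finite-horizon LQG cost `J(K)` of the paper, written in terms of the
square roots `Msq = M^{1/2}`, `Swsq = Σw^{1/2}`, `Rsq = R^{1/2}`, `Svsq = Σv^{1/2}`. -/
def Jcost {nn mm pp : ℕ}
    (P11 : Matrix (Fin nn) (Fin nn) ℝ) (P12 : Matrix (Fin nn) (Fin mm) ℝ)
    (C : Matrix (Fin pp) (Fin nn) ℝ)
    (Msq Swsq : Matrix (Fin nn) (Fin nn) ℝ)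
    (Rsq : Matrix (Fin mm) (Fin mm) ℝ) (Svsq : Matrix (Fin pp) (Fin pp) ℝ)
    (μ : Fin nn → ℝ) (K : Matrix (Fin mm) (Fin pp) ℝ) : ℝ :=
  frobSq (Msq * (1 - P12 * K * C)⁻¹ * P11 * Swsq)
  + frobSq (Msq * P12 * K * (1 - C * P12 * K)⁻¹ * Svsq)
  + frobSq (Rsq * K * (1 - C * P12 * K)⁻¹ * C * P11 * Swsq)
  + frobSq (Rsq * K * (1 - C * P12 * K)⁻¹ * Svsq)
  + vecSq ((Msq * (1 - P12 * K * C)⁻¹ * P11).mulVec μ)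
  + vecSq ((Rsq * K * (1 - C * P12 * K)⁻¹ * C * P11).mulVec μ)

/-- The disturbance-feedback cost `J̃(Q)` of the paper, written in terms of the
square roots `Msq = M^{1/2}`, `Swsq = Σw^{1/2}`, `Rsq = R^{1/2}`, `Svsq = Σv^{1/2}`. -/
def Jtilde {nn mm pp : ℕ}
    (P11 : Matrix (Fin nn) (Fin nn) ℝ) (P12 : Matrix (Fin nn) (Fin mm) ℝ)
    (C : Matrix (Fin pp) (Fin nn) ℝ)
    (Msq Swsq : Matrix (Fin nn) (Fin nn) ℝ)
    (Rsq : Matrix (Fin mm) (Fin mm) ℝ) (Svsq : Matrix (Fin pp) (Fin pp) ℝ)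
    (μ : Fin nn → ℝ) (Q : Matrix (Fin mm) (Fin pp) ℝ) : ℝ :=
  frobSq (Msq * (1 + P12 * Q * C) * P11 * Swsq)
  + frobSq (Msq * P12 * Q * Svsq)
  + frobSq (Rsq * Q * C * P11 * Swsq)
  + frobSq (Rsq * Q * Svsq)
  + vecSq ((Rsq * Q * C * P11).mulVec μ)
  + vecSq ((Msq * (1 + P12 * Q * C) * P11).mulVec μ)

section
open scoped ComplexOrder

/-- The positive semidefinite square root of a positive semidefinite matrix
(the Mathlib definition `Matrix.PosSemidef.sqrt` of December 2024, since removed). -/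
def Matrix.PosSemidef.sqrt {n : Type*} [Fintype n] [DecidableEq n] {𝕜 : Type*} [RCLike 𝕜]
    {A : Matrix n n 𝕜} (hA : A.PosSemidef) : Matrix n n 𝕜 :=
  hA.1.eigenvectorUnitary.1 * diagonal ((↑) ∘ (√·) ∘ hA.1.eigenvalues) *
  (star hA.1.eigenvectorUnitary : Matrix n n 𝕜)

end

end

/-!
Under the change of variables `Q = K (I - G K)⁻¹` the cost `J(K)` becomes `J̃(Q)`, a sum of
squared Frobenius norms of affine functions of `Q`, hence a convex quadratic. Strong quadratic
invariance makes the change of variables map `𝒦` into itself, and for `Δ ∈ 𝒦` the direction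
`D = (I - K̄ G) Δ (I - G K̄)`, which again lies in `𝒦`, is sent by its differential at `K̄` to `Δ`.
So if the derivatives of `J` at `K̄` vanish along `𝒦`, so do those of `J̃` at `Q̄` along `𝒦`, and a
convex quadratic is minimized wherever its directional derivatives vanish.
-/

theorem hasDerivAt_of_eq_add_smul {𝕜 F : Type*} [NontriviallyNormedField 𝕜]
    [NormedAddCommGroup F] [NormedSpace 𝕜 F] {g φ : 𝕜 → F} {a : 𝕜} (hφ : ContinuousAt φ a)
    (hg : ∀ t, g t = g a + (t - a) • φ t) : HasDerivAt g (φ a) a := by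
  rw [hasDerivAt_iff_tendsto_slope]
  refine (hφ.tendsto.mono_left nhdsWithin_le_nhds).congr' ?_
  filter_upwards [self_mem_nhdsWithin] with t (ht : t ≠ a)
  rw [slope_def_module, hg t, add_sub_cancel_left, smul_smul,
    inv_mul_cancel₀ (sub_ne_zero.2 ht), one_smul]

structure ConvexQuadratic {E : Type*} [AddCommGroup E] [Module ℝ E] [TopologicalSpace E]
    (f : E → ℝ) where
  lin : E → E → ℝ
  quad : E → ℝ
  map_add : ∀ A B, f (A + B) = f A + lin A B + quad B
  lin_smul : ∀ A (t : ℝ) B, lin A (t • B) = t * lin A B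
  quad_smul : ∀ (t : ℝ) B, quad (t • B) = t ^ 2 * quad B
  continuous_lin : ∀ A, Continuous (lin A)
  continuous_quad : Continuous quad
  quad_nonneg : ∀ B, 0 ≤ quad B

namespace ConvexQuadratic

variable {E : Type*} [AddCommGroup E] [Module ℝ E] [TopologicalSpace E] {f g : E → ℝ}

def add (e : ConvexQuadratic f) (e' : ConvexQuadratic g) : ConvexQuadratic (f + g) where
  lin A B := e.lin A B + e'.lin A B
  quad B := e.quad B + e'.quad B
  map_add A B := by simp only [Pi.add_apply, e.map_add, e'.map_add]; ring
  lin_smul A t B := by rw [e.lin_smul, e'.lin_smul, mul_add]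
  quad_smul t B := by rw [e.quad_smul, e'.quad_smul, mul_add]
  continuous_lin A := (e.continuous_lin A).add (e'.continuous_lin A)
  continuous_quad := e.continuous_quad.add e'.continuous_quad
  quad_nonneg B := add_nonneg (e.quad_nonneg B) (e'.quad_nonneg B)

def congr (e : ConvexQuadratic f) (h : f = g) : ConvexQuadratic g := h ▸ e

theorem add_lin_le (e : ConvexQuadratic f) (A B : E) : f A + e.lin A B ≤ f (A + B) := by
  linarith [e.map_add A B, e.quad_nonneg B]

theorem hasDerivAt_add_smul (e : ConvexQuadratic f) (A : E) {S : ℝ → E}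
    (hS : ContinuousAt S 0) : HasDerivAt (fun t => f (A + t • S t)) (e.lin A (S 0)) 0 := by
  have hφ : ContinuousAt (fun t => e.lin A (S t) + t * e.quad (S t)) 0 :=
    ((e.continuous_lin A).continuousAt.comp hS).add
      (continuousAt_id.mul (e.continuous_quad.continuousAt.comp hS))
  simpa using hasDerivAt_of_eq_add_smul hφ fun t => by
    simp only [zero_smul, add_zero, sub_zero, smul_eq_mul, e.map_add, e.lin_smul, e.quad_smul]
    ring

theorem le_of_deriv_eq_zero (e : ConvexQuadratic f) (A : E) {S : ℝ → E}
    (hS : ContinuousAt S 0) (h : deriv (fun t => f (A + t • S t)) 0 = 0) :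
    f A ≤ f (A + S 0) := by
  have hlin : e.lin A (S 0) = 0 := (e.hasDerivAt_add_smul A hS).deriv.symm.trans h
  linarith [e.add_lin_le A (S 0)]

end ConvexQuadratic

section frobSq

variable {a b : Type*} [Fintype a] [Fintype b]

theorem frobSq_add (U V : Matrix a b ℝ) :
    frobSq (U + V) = frobSq U + 2 * ∑ i, ∑ j, U i j * V i j + frobSq V := by
  simp only [frobSq, Matrix.add_apply, add_sq, Finset.sum_add_distrib, Finset.mul_sum, mul_assoc]

theorem frobSq_smul (t : ℝ) (U : Matrix a b ℝ) : frobSq (t • U) = t ^ 2 * frobSq U := by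
  simp only [frobSq, Matrix.smul_apply, smul_eq_mul, mul_pow, Finset.mul_sum]

theorem frobSq_nonneg (U : Matrix a b ℝ) : 0 ≤ frobSq U := by
  unfold frobSq; positivity

theorem vecSq_mulVec {c : Type*} [Fintype c] (A : Matrix a c ℝ) (v : c → ℝ) :
    vecSq (A *ᵥ v) = frobSq (A * replicateCol Unit v) := by
  simp [vecSq, frobSq, ← replicateCol_mulVec]

variable {m p : Type*} [Fintype m] [Fintype p]

def ConvexQuadratic.frobSqAffine (X : Matrix a b ℝ) (Y : Matrix a m ℝ) (Z : Matrix p b ℝ) :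
    ConvexQuadratic fun Q : Matrix m p ℝ => frobSq (X + Y * Q * Z) where
  lin A B := 2 * ∑ i, ∑ j, (X + Y * A * Z) i j * (Y * B * Z) i j
  quad B := frobSq (Y * B * Z)
  map_add A B := by
    rw [Matrix.mul_add, Matrix.add_mul, ← add_assoc, frobSq_add]
  lin_smul A t B := by
    simp only [Matrix.mul_smul, Matrix.smul_mul, Matrix.smul_apply, smul_eq_mul, Finset.mul_sum,
      mul_left_comm]
  quad_smul t B := by rw [Matrix.mul_smul, Matrix.smul_mul, frobSq_smul]
  continuous_lin A := by fun_prop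
  continuous_quad := by unfold frobSq; fun_prop
  quad_nonneg B := frobSq_nonneg _

end frobSq

section Jtilde

variable {nn mm pp : ℕ} (P11 : Matrix (Fin nn) (Fin nn) ℝ) (P12 : Matrix (Fin nn) (Fin mm) ℝ)
    (C : Matrix (Fin pp) (Fin nn) ℝ) (Msq Swsq : Matrix (Fin nn) (Fin nn) ℝ)
    (Rsq : Matrix (Fin mm) (Fin mm) ℝ) (Svsq : Matrix (Fin pp) (Fin pp) ℝ) (μ : Fin nn → ℝ)

theorem Jtilde_eq_sum_frobSq : Jtilde P11 P12 C Msq Swsq Rsq Svsq μ = fun Q =>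
    let u := replicateCol Unit μ
    frobSq (Msq * P11 * Swsq + Msq * P12 * Q * (C * P11 * Swsq))
      + frobSq (0 + Msq * P12 * Q * Svsq)
      + frobSq (0 + Rsq * Q * (C * P11 * Swsq))
      + frobSq (0 + Rsq * Q * Svsq)
      + frobSq (0 + Rsq * Q * (C * P11 * u))
      + frobSq (Msq * P11 * u + Msq * P12 * Q * (C * P11 * u)) := by
  funext Q
  simp only [Jtilde, vecSq_mulVec, zero_add, Matrix.mul_add, Matrix.add_mul, Matrix.mul_one,
    Matrix.mul_assoc]

def Jtilde.convexQuadratic : ConvexQuadratic (Jtilde P11 P12 C Msq Swsq Rsq Svsq μ) :=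
  ((((((ConvexQuadratic.frobSqAffine _ _ _).add (.frobSqAffine _ _ _)).add
    (.frobSqAffine _ _ _)).add (.frobSqAffine _ _ _)).add (.frobSqAffine _ _ _)).add
    (.frobSqAffine _ _ _)).congr (Jtilde_eq_sum_frobSq P11 P12 C Msq Swsq Rsq Svsq μ).symm

end Jtilde

section Youla

variable {R : Type*} [CommRing R] {m n p : Type*} [Fintype m] [Fintype n] [Fintype p]
  [DecidableEq n] [DecidableEq p]

def Submodule.IsStronglyQuadraticallyInvariant (𝒦 : Submodule R (Matrix m p R))
    (G : Matrix p m R) : Prop :=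
  ∀ K₁ ∈ 𝒦, ∀ K₂ ∈ 𝒦, K₁ * G * K₂ ∈ 𝒦

noncomputable def youla (G : Matrix p m R) (K : Matrix m p R) : Matrix m p R :=
  K * (1 - G * K)⁻¹

variable {G : Matrix p m R} {K K' : Matrix m p R}

theorem inv_one_sub_mul_mul (A : Matrix n m R) (B : Matrix p n R)
    (h : IsUnit (1 - B * A * K).det) : (1 - A * K * B)⁻¹ = 1 + A * youla (B * A) K * B := by
  refine inv_eq_right_inv ?_
  calc (1 - A * K * B) * (1 + A * youla (B * A) K * B)
      = 1 + A * K * ((1 - B * A * K) * (1 - B * A * K)⁻¹ - 1) * B := by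
        simp only [youla, Matrix.mul_add, Matrix.mul_sub, Matrix.sub_mul, Matrix.mul_one,
          Matrix.one_mul, Matrix.mul_assoc]
        abel
    _ = 1 := by rw [mul_nonsing_inv _ h, sub_self, Matrix.mul_zero, Matrix.zero_mul, add_zero]

variable [DecidableEq m]

theorem isUnit_det_one_sub_mul_of_isNilpotent (h : IsNilpotent (K * G)) :
    IsUnit (1 - G * K).det := by
  rw [det_one_sub_mul_comm]
  exact (isUnit_iff_isUnit_det _).mp h.isUnit_one_sub

theorem youla_eq_inv_mul (hK : IsUnit (1 - G * K).det) : youla G K = (1 - K * G)⁻¹ * K := by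
  have hK' : IsUnit (1 - K * G).det := by rwa [det_one_sub_mul_comm]
  have h : (1 - K * G) * K = K * (1 - G * K) := by
    simp only [Matrix.sub_mul, Matrix.mul_sub, Matrix.one_mul, Matrix.mul_one, Matrix.mul_assoc]
  calc youla G K = (1 - K * G)⁻¹ * ((1 - K * G) * K) * (1 - G * K)⁻¹ := by
        rw [youla, nonsing_inv_mul_cancel_left _ _ hK']
    _ = (1 - K * G)⁻¹ * K := by
        rw [h, ← Matrix.mul_assoc (1 - K * G)⁻¹ K, mul_nonsing_inv_cancel_right _ _ hK]

theorem youla_sub_youla (hK : IsUnit (1 - G * K).det) (hK' : IsUnit (1 - G * K').det) :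
    youla G K' - youla G K = (1 - K * G)⁻¹ * (K' - K) * (1 - G * K')⁻¹ := by
  have hKG : IsUnit (1 - K * G).det := by rwa [det_one_sub_mul_comm]
  have h : K' - K = (1 - K * G) * K' - K * (1 - G * K') := by
    simp only [Matrix.sub_mul, Matrix.mul_sub, Matrix.one_mul, Matrix.mul_one, Matrix.mul_assoc]
    abel
  rw [h, Matrix.mul_sub, Matrix.sub_mul, nonsing_inv_mul_cancel_left _ _ hKG, youla,
    youla_eq_inv_mul hK, ← Matrix.mul_assoc _ K, mul_nonsing_inv_cancel_right _ _ hK']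

theorem youla_add_smul {D : Matrix m p R} (t : R) (hK : IsUnit (1 - G * K).det)
    (hKD : IsUnit (1 - G * (K + t • D)).det) :
    youla G (K + t • D) = youla G K + t • ((1 - K * G)⁻¹ * D * (1 - G * (K + t • D))⁻¹) := by
  rw [← sub_eq_iff_eq_add', youla_sub_youla hK hKD, add_sub_cancel_left, Matrix.mul_smul,
    Matrix.smul_mul]

namespace Submodule.IsStronglyQuadraticallyInvariant

variable {𝒦 : Submodule R (Matrix m p R)}

theorem youla_mem (h𝒦 : 𝒦.IsStronglyQuadraticallyInvariant G) (hK : K ∈ 𝒦)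
    (hnil : IsNilpotent (K * G)) : youla G K ∈ 𝒦 := by
  obtain ⟨r, hr⟩ := hnil
  have hinv : (1 - K * G)⁻¹ = ∑ i ∈ Finset.range r, (K * G) ^ i :=
    inv_eq_right_inv (by rw [mul_neg_geom_sum, hr, sub_zero])
  have hpow : ∀ i, (K * G) ^ i * K ∈ 𝒦 := by
    intro i
    induction i with
    | zero => simpa using hK
    | succ i ih => simpa only [pow_succ', Matrix.mul_assoc] using h𝒦 K hK _ ih
  rw [youla_eq_inv_mul (isUnit_det_one_sub_mul_of_isNilpotent ⟨r, hr⟩), hinv, Matrix.sum_mul]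
  exact Submodule.sum_mem _ fun i _ => hpow i

theorem one_sub_mul_mul_one_sub_mem (h𝒦 : 𝒦.IsStronglyQuadraticallyInvariant G)
    {Δ : Matrix m p R} (hK : K ∈ 𝒦) (hΔ : Δ ∈ 𝒦) : (1 - K * G) * Δ * (1 - G * K) ∈ 𝒦 := by
  have h : (1 - K * G) * Δ * (1 - G * K) = Δ - K * G * Δ - Δ * G * K + K * G * (Δ * G * K) := by
    simp only [Matrix.sub_mul, Matrix.mul_sub, Matrix.one_mul, Matrix.mul_one, Matrix.mul_assoc]
    abel
  rw [h]
  exact add_mem (sub_mem (sub_mem hΔ (h𝒦 K hK Δ hΔ)) (h𝒦 Δ hΔ K hK))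
    (h𝒦 K hK _ (h𝒦 Δ hΔ K hK))

end Submodule.IsStronglyQuadraticallyInvariant

end Youla

section Cost

variable {nn mm pp : ℕ} {P11 : Matrix (Fin nn) (Fin nn) ℝ} {P12 : Matrix (Fin nn) (Fin mm) ℝ}
    {C : Matrix (Fin pp) (Fin nn) ℝ} {Msq Swsq : Matrix (Fin nn) (Fin nn) ℝ}
    {Rsq : Matrix (Fin mm) (Fin mm) ℝ} {Svsq : Matrix (Fin pp) (Fin pp) ℝ} {μ : Fin nn → ℝ}

theorem Jcost_eq_Jtilde_youla {K : Matrix (Fin mm) (Fin pp) ℝ}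
    (hK : IsUnit (1 - C * P12 * K).det) :
    Jcost P11 P12 C Msq Swsq Rsq Svsq μ K
      = Jtilde P11 P12 C Msq Swsq Rsq Svsq μ (youla (C * P12) K) := by
  rw [Jcost, Jtilde, inv_one_sub_mul_mul P12 C hK]
  simp only [youla, Matrix.mul_assoc]
  ring

theorem continuousAt_inv_one_sub_mul_add_smul {a b : Type*} [Fintype a] [Fintype b]
    [DecidableEq a] {G : Matrix a b ℝ} {K D : Matrix b a ℝ} (hK : IsUnit (1 - G * K).det) :
    ContinuousAt (fun t : ℝ => (1 - G * (K + t • D))⁻¹) 0 := by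
  refine ContinuousAt.comp (g := Inv.inv) ?_ (by fun_prop)
  refine continuousAt_matrix_inv _ ?_
  rw [Ring.inverse_eq_inv']
  exact continuousAt_inv₀ (by simpa using hK.ne_zero)

theorem Jcost_le_of_stationary {𝒦 : Submodule ℝ (Matrix (Fin mm) (Fin pp) ℝ)}
    (hSQI : 𝒦.IsStronglyQuadraticallyInvariant (C * P12))
    (hnil : ∀ K ∈ 𝒦, IsNilpotent (K * (C * P12)))
    {Kbar : Matrix (Fin mm) (Fin pp) ℝ} (hKbar : Kbar ∈ 𝒦)
    (hstat : ∀ D ∈ 𝒦, deriv (fun t : ℝ =>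
      Jcost P11 P12 C Msq Swsq Rsq Svsq μ (Kbar + t • D)) 0 = 0)
    {K : Matrix (Fin mm) (Fin pp) ℝ} (hK : K ∈ 𝒦) :
    Jcost P11 P12 C Msq Swsq Rsq Svsq μ Kbar ≤ Jcost P11 P12 C Msq Swsq Rsq Svsq μ K := by
  set G := C * P12
  have hunit : ∀ L ∈ 𝒦, IsUnit (1 - G * L).det := fun L hL =>
    isUnit_det_one_sub_mul_of_isNilpotent (hnil L hL)
  set Δ := youla G K - youla G Kbar
  have hΔ : Δ ∈ 𝒦 :=
    sub_mem (hSQI.youla_mem hK (hnil K hK)) (hSQI.youla_mem hKbar (hnil Kbar hKbar))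
  set D := (1 - Kbar * G) * Δ * (1 - G * Kbar)
  have hD : D ∈ 𝒦 := hSQI.one_sub_mul_mul_one_sub_mem hKbar hΔ
  set S : ℝ → Matrix (Fin mm) (Fin pp) ℝ :=
    fun t => (1 - Kbar * G)⁻¹ * D * (1 - G * (Kbar + t • D))⁻¹
  have hcurve : ∀ t : ℝ, Jcost P11 P12 C Msq Swsq Rsq Svsq μ (Kbar + t • D)
      = Jtilde P11 P12 C Msq Swsq Rsq Svsq μ (youla G Kbar + t • S t) := fun t => by
    have hKt := hunit _ (add_mem hKbar (𝒦.smul_mem t hD))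
    rw [Jcost_eq_Jtilde_youla hKt, youla_add_smul t (hunit Kbar hKbar) hKt]
  have hS0 : S 0 = Δ := by
    have hKG : IsUnit (1 - Kbar * G).det := by rw [det_one_sub_mul_comm]; exact hunit Kbar hKbar
    simp only [S, D, zero_smul, add_zero, Matrix.mul_assoc,
      nonsing_inv_mul_cancel_left _ _ hKG, mul_nonsing_inv _ (hunit Kbar hKbar), Matrix.mul_one]
  have hS : ContinuousAt S 0 :=
    (continuous_const.matrix_mul continuous_id).continuousAt.comp
      (continuousAt_inv_one_sub_mul_add_smul (hunit Kbar hKbar))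
  have hmin := (Jtilde.convexQuadratic P11 P12 C Msq Swsq Rsq Svsq μ).le_of_deriv_eq_zero
    (youla G Kbar) hS (by simpa only [hcurve] using hstat D hD)
  rwa [hS0, add_sub_cancel, ← Jcost_eq_Jtilde_youla (hunit K hK),
    ← Jcost_eq_Jtilde_youla (hunit Kbar hKbar)] at hmin

end Cost

theorem strongQI_implies_uniquely_stationary_general {n m p N : ℕ}
    (P11 : Matrix (Fin (n * (N + 1))) (Fin (n * (N + 1))) ℝ)
    (P12 : Matrix (Fin (n * (N + 1))) (Fin (m * N)) ℝ)
    (C : Matrix (Fin (p * N)) (Fin (n * (N + 1))) ℝ)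
    {M W : Matrix (Fin (n * (N + 1))) (Fin (n * (N + 1))) ℝ}
    {R : Matrix (Fin (m * N)) (Fin (m * N)) ℝ}
    {V : Matrix (Fin (p * N)) (Fin (p * N)) ℝ}
    (hM : M.PosSemidef) (hW : W.PosSemidef) (hR : R.PosDef) (hV : V.PosDef)
    (μ : Fin (n * (N + 1)) → ℝ)
    (G : Matrix (Fin (p * N)) (Fin (m * N)) ℝ) (hG : G = C * P12)
    (𝒦 : Submodule ℝ (Matrix (Fin (m * N)) (Fin (p * N)) ℝ))
    (hSQI : ∀ K₁ ∈ 𝒦, ∀ K₂ ∈ 𝒦, K₁ * G * K₂ ∈ 𝒦)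
    (hnilp : ∀ K ∈ 𝒦, IsNilpotent (K * G)) :
    ∀ Kbar ∈ 𝒦,
      (∀ D ∈ 𝒦, deriv (fun t : ℝ =>
          Jcost P11 P12 C hM.sqrt hW.sqrt hR.posSemidef.sqrt hV.posSemidef.sqrt μ
            (Kbar + t • D)) 0 = 0) →
      ∀ K ∈ 𝒦,
        Jcost P11 P12 C hM.sqrt hW.sqrt hR.posSemidef.sqrt hV.posSemidef.sqrt μ Kbar ≤
        Jcost P11 P12 C hM.sqrt hW.sqrt hR.posSemidef.sqrt hV.posSemidef.sqrt μ K := by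
  subst hG
  intro Kbar hKbar hstat K hK
  exact Jcost_le_of_stationary hSQI hnilp hKbar hstat hK

/-- **strong QI implies unique stationarity.** If `𝒦 ⊆ ℝ^{mN×pN}` is a
strongly quadratically invariant subspace with respect to `G = C·P12` with `K·G` nilpotent
on `𝒦`, then the problem `min_{K ∈ 𝒦} J(K)` is uniquely stationary: every `Kbar ∈ 𝒦` whose
directional derivatives of `J` along `𝒦` all vanish (`∇J(Kbar) ∈ 𝒦^⊥`) is a global
minimizer of `J` over `𝒦`. -/
theorem strongQI_implies_uniquely_stationary {n m p N : ℕ}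
    (hn : 0 < n) (hm : 0 < m) (hp : 0 < p) (hN : 0 < N)
    (P11 : Matrix (Fin (n * (N + 1))) (Fin (n * (N + 1))) ℝ)
    (P12 : Matrix (Fin (n * (N + 1))) (Fin (m * N)) ℝ)
    (C : Matrix (Fin (p * N)) (Fin (n * (N + 1))) ℝ)
    {M W : Matrix (Fin (n * (N + 1))) (Fin (n * (N + 1))) ℝ}
    {R : Matrix (Fin (m * N)) (Fin (m * N)) ℝ}
    {V : Matrix (Fin (p * N)) (Fin (p * N)) ℝ}
    (hM : M.PosSemidef) (hW : W.PosSemidef) (hR : R.PosDef) (hV : V.PosDef)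
    (μ : Fin (n * (N + 1)) → ℝ)
    (G : Matrix (Fin (p * N)) (Fin (m * N)) ℝ) (hG : G = C * P12)
    (𝒦 : Submodule ℝ (Matrix (Fin (m * N)) (Fin (p * N)) ℝ))
    (hSQI : ∀ K₁ ∈ 𝒦, ∀ K₂ ∈ 𝒦, K₁ * G * K₂ ∈ 𝒦)
    (hnilp : ∀ K ∈ 𝒦, IsNilpotent (K * G)) :
    ∀ Kbar ∈ 𝒦,
      (∀ D ∈ 𝒦, deriv (fun t : ℝ =>
          Jcost P11 P12 C hM.sqrt hW.sqrt hR.posSemidef.sqrt hV.posSemidef.sqrt μ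
            (Kbar + t • D)) 0 = 0) →
      ∀ K ∈ 𝒦,
        Jcost P11 P12 C hM.sqrt hW.sqrt hR.posSemidef.sqrt hV.posSemidef.sqrt μ Kbar ≤
        Jcost P11 P12 C hM.sqrt hW.sqrt hR.posSemidef.sqrt hV.posSemidef.sqrt μ K :=
  strongQI_implies_uniquely_stationary_general P11 P12 C hM hW hR hV μ G hG 𝒦 hSQI hnilp
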